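/- Let θ(x) = ∑_{p prime, p ≤ x} log p, p_n the n-th prime, and g_n = p_{n+1} − p_n. Suppose that |θ(x) − x| < (1/2) x exp(−√(log x)/3) for all x ≥ 41. Then for every n ≥ 1 one has g_n / p_n < exp(−√(log p_n)/3) / (1 − (1/2) exp(−√(log p_n)/3)). -/
import Mathlib


/-- The first Chebyshev function `θ(x) = ∑_{p prime, p ≤ x} log p`. -/
noncomputable def chebyshevθ (x : ℝ) : ℝ :=
  ∑ p ∈ Finset.filter Nat.Prime (Finset.range (⌊x⌋₊ + 1)), Real.log p

/-- The `n`-th prime number, indexed so that `nthPrime 1 = 2`. -/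
noncomputable def nthPrime (n : ℕ) : ℕ := Nat.nth Nat.Prime (n - 1)

/-- The `n`-th prime gap `gₙ = p_{n+1} - pₙ` (as a real number). -/
noncomputable def primeGap (n : ℕ) : ℝ := (nthPrime (n + 1) : ℝ) - (nthPrime n : ℝ)

lemma nth_prime_eq {k m : ℕ} (hm : m.Prime) (hc : Nat.count Nat.Prime m = k) :
    Nat.nth Nat.Prime k = m := by
  rw [← hc]; exact Nat.nth_count hm

lemma np0 : Nat.nth Nat.Prime 0 = 2 := nth_prime_eq (by norm_num) (by decide)
lemma np1 : Nat.nth Nat.Prime 1 = 3 := nth_prime_eq (by norm_num) (by decide)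
lemma np2 : Nat.nth Nat.Prime 2 = 5 := nth_prime_eq (by norm_num) (by decide)
lemma np3 : Nat.nth Nat.Prime 3 = 7 := nth_prime_eq (by norm_num) (by decide)
lemma np4 : Nat.nth Nat.Prime 4 = 11 := nth_prime_eq (by norm_num) (by decide)
lemma np5 : Nat.nth Nat.Prime 5 = 13 := nth_prime_eq (by norm_num) (by decide)
lemma np6 : Nat.nth Nat.Prime 6 = 17 := nth_prime_eq (by norm_num) (by decide)
lemma np7 : Nat.nth Nat.Prime 7 = 19 := nth_prime_eq (by norm_num) (by decide)
lemma np8 : Nat.nth Nat.Prime 8 = 23 := nth_prime_eq (by norm_num) (by decide)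
lemma np9 : Nat.nth Nat.Prime 9 = 29 := nth_prime_eq (by norm_num) (by decide)
lemma np10 : Nat.nth Nat.Prime 10 = 31 := nth_prime_eq (by norm_num) (by decide)
lemma np11 : Nat.nth Nat.Prime 11 = 37 := nth_prime_eq (by norm_num) (by decide)
lemma np12 : Nat.nth Nat.Prime 12 = 41 := nth_prime_eq (by norm_num) (by decide)

lemma nth_prime_prime (k : ℕ) : (Nat.nth Nat.Prime k).Prime :=
  Nat.nth_mem_of_infinite Nat.infinite_setOf_prime k

lemma nth_prime_lt (k : ℕ) : Nat.nth Nat.Prime k < Nat.nth Nat.Prime (k + 1) :=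
  (Nat.nth_lt_nth Nat.infinite_setOf_prime).2 (Nat.lt_succ_self k)

/-- No prime lies strictly between consecutive primes. -/
lemma no_prime_between {k r : ℕ} (hr : r.Prime) (h : r < Nat.nth Nat.Prime (k + 1)) :
    r ≤ Nat.nth Nat.Prime k := by
  have h1 : Nat.nth Nat.Prime (Nat.count Nat.Prime r) = r := Nat.nth_count hr
  have h2 : Nat.count Nat.Prime r < k + 1 := by
    rw [← Nat.nth_lt_nth Nat.infinite_setOf_prime, h1]; exact h
  calc r = Nat.nth Nat.Prime (Nat.count Nat.Prime r) := h1.symm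
    _ ≤ Nat.nth Nat.Prime k :=
      Nat.nth_monotone Nat.infinite_setOf_prime (Nat.lt_succ_iff.1 h2)

/-- θ is constant between consecutive primes. -/
lemma theta_const {k : ℕ} {x : ℝ} (hx : (Nat.nth Nat.Prime k : ℝ) ≤ x)
    (hx' : x < (Nat.nth Nat.Prime (k + 1) : ℝ)) :
    chebyshevθ x = chebyshevθ (Nat.nth Nat.Prime k : ℝ) := by
  have hx0 : (0 : ℝ) ≤ x := le_trans (Nat.cast_nonneg _) hx
  unfold chebyshevθ
  congr 1
  ext r
  simp only [Finset.mem_filter, Finset.mem_range, Nat.lt_succ_iff, Nat.floor_natCast]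
  constructor
  · rintro ⟨hr1, hr2⟩
    refine ⟨no_prime_between hr2 ?_, hr2⟩
    have hxr : (r : ℝ) ≤ x :=
      le_trans (by exact_mod_cast hr1 : (r : ℝ) ≤ (⌊x⌋₊ : ℝ)) (Nat.floor_le hx0)
    exact_mod_cast hxr.trans_lt hx'
  · rintro ⟨hr1, hr2⟩
    refine ⟨Nat.le_floor ?_, hr2⟩
    exact le_trans (by exact_mod_cast hr1) hx

/-- The case of small primes `p ≤ 37`. -/
lemma small_case {p q : ℕ} (hp2 : 2 ≤ p) (hp37 : p ≤ 37)
    (hgap : 3 * ((q : ℝ) - p) ≤ 2 * p) :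
    ((q : ℝ) - p) / p < Real.exp (-Real.sqrt (Real.log p) / 3) /
      (1 - (1 / 2) * Real.exp (-Real.sqrt (Real.log p) / 3)) := by
  set ε := Real.exp (-Real.sqrt (Real.log p) / 3) with hε
  have hppos : (0 : ℝ) < p := by positivity
  have hp1 : (1 : ℝ) ≤ (p : ℝ) := by exact_mod_cast le_trans one_le_two hp2
  have hlogp0 : 0 ≤ Real.log p := Real.log_nonneg hp1
  have hε1 : ε ≤ 1 := by
    rw [hε]
    apply Real.exp_le_one_iff.2
    have := Real.sqrt_nonneg (Real.log p)
    linarith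
  have hlog2 : (2 : ℝ) / 3 < Real.log 2 := by
    have := Real.log_two_gt_d9; linarith
  have hlp : Real.log p < (3 * Real.log 2) * (3 * Real.log 2) := by
    have h1 : Real.log p < Real.log 64 := by
      apply Real.log_lt_log hppos
      exact_mod_cast lt_of_le_of_lt hp37 (by norm_num : (37 : ℕ) < 64)
    have h2 : Real.log 64 = 6 * Real.log 2 := by
      rw [show (64 : ℝ) = 2 ^ (6 : ℕ) by norm_num, Real.log_pow]; push_cast; ring
    nlinarith [Real.log_pos (by norm_num : (1 : ℝ) < 2)]
  have hsqrt : Real.sqrt (Real.log p) < 3 * Real.log 2 := by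
    have h3 : (0 : ℝ) < 3 * Real.log 2 := by linarith
    exact (Real.sqrt_lt' h3).2 (by nlinarith)
  have hεgt : (1 / 2 : ℝ) < ε := by
    have h2 : Real.exp (-Real.log 2) = 1 / 2 := by
      rw [Real.exp_neg, Real.exp_log (by norm_num : (0:ℝ) < 2)]; norm_num
    rw [hε, ← h2]
    exact Real.exp_lt_exp.2 (by linarith)
  have hden : (0 : ℝ) < 1 - (1 / 2) * ε := by linarith
  rw [div_lt_div_iff₀ hppos hden]
  nlinarith [mul_le_mul_of_nonneg_right hgap (le_of_lt hden)]

theorem primeGap_half_third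
    (hθ : ∀ x : ℝ, 41 ≤ x → |chebyshevθ x - x| <
      (1 / 2) * x * Real.exp (-Real.sqrt (Real.log x) / 3)) :
    ∀ n : ℕ, 1 ≤ n →
      primeGap n / (nthPrime n : ℝ) <
        Real.exp (-Real.sqrt (Real.log (nthPrime n)) / 3) /
          (1 - (1 / 2) * Real.exp (-Real.sqrt (Real.log (nthPrime n)) / 3)) := by
  intro n hn
  obtain ⟨k, rfl⟩ : ∃ k, n = k + 1 := ⟨n - 1, (Nat.succ_pred_eq_of_pos hn).symm⟩
  obtain ⟨p, hpdef⟩ : ∃ p, Nat.nth Nat.Prime k = p := ⟨_, rfl⟩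
  obtain ⟨q, hqdef⟩ : ∃ q, Nat.nth Nat.Prime (k + 1) = q := ⟨_, rfl⟩
  have hnp : nthPrime (k + 1) = p := hpdef
  have hnq : nthPrime (k + 1 + 1) = q := hqdef
  have hpprime : p.Prime := hpdef ▸ nth_prime_prime k
  have hqprime : q.Prime := hqdef ▸ nth_prime_prime (k + 1)
  have hpq : p < q := hpdef ▸ hqdef ▸ nth_prime_lt k
  have hGap : primeGap (k + 1) = (q : ℝ) - (p : ℝ) := by
    simp [primeGap, hnp, hnq]
  rw [hGap, hnp]
  have hp2 : 2 ≤ p := hpprime.two_le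
  have hppos : (0 : ℝ) < (p : ℝ) := by exact_mod_cast hpprime.pos
  by_cases hsmall : p ≤ 37
  · -- small case: verify gap bound numerically
    apply small_case hp2 hsmall
    have hk11 : k ≤ 11 := by
      by_contra hk
      push_neg at hk
      have h41 : 41 ≤ Nat.nth Nat.Prime k :=
        np12 ▸ Nat.nth_monotone Nat.infinite_setOf_prime (by omega)
      omega
    subst hpdef
    subst hqdef
    interval_cases k <;>
      norm_num [np0, np1, np2, np3, np4, np5, np6, np7, np8, np9, np10, np11, np12]
  · -- main case: p ≥ 41
    push_neg at hsmall
    have hp41 : 41 ≤ p := by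
      by_contra hlt
      push_neg at hlt
      have h1 : p = 38 ∨ p = 39 ∨ p = 40 := by omega
      rcases h1 with h | h | h <;> rw [h] at hpprime <;> exact absurd hpprime (by decide)
    have hp41R : (41 : ℝ) ≤ (p : ℝ) := by exact_mod_cast hp41
    set ε := Real.exp (-Real.sqrt (Real.log p) / 3) with hεdef
    have hεpos : 0 < ε := Real.exp_pos _
    have hε1 : ε ≤ 1 := by
      apply Real.exp_le_one_iff.2
      have h1 : 0 ≤ Real.log p := Real.log_nonneg (by linarith)
      have := Real.sqrt_nonneg (Real.log p)
      linarith
    have hden : (0 : ℝ) < 1 - (1 / 2) * ε := by linarith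
    have hεmono : ∀ x : ℝ, (p : ℝ) ≤ x → Real.exp (-Real.sqrt (Real.log x) / 3) ≤ ε := by
      intro x hx
      apply Real.exp_le_exp.2
      have h1 : Real.log p ≤ Real.log x := Real.log_le_log (by linarith) hx
      have h2 : Real.sqrt (Real.log p) ≤ Real.sqrt (Real.log x) := Real.sqrt_le_sqrt h1
      linarith
    have hθp := hθ (p : ℝ) hp41R
    have hθp_up : chebyshevθ p < (p : ℝ) + (1 / 2) * p * ε := by
      have := (abs_lt.1 hθp).2
      linarith
    have hθp_lo : (p : ℝ) - (1 / 2) * p * ε < chebyshevθ p := by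
      have := (abs_lt.1 hθp).1
      linarith
    have hkey : ∀ x : ℝ, (p : ℝ) ≤ x → x < (q : ℝ) →
        x * (1 - (1 / 2) * ε) < chebyshevθ p := by
      intro x hx hxq
      have hx41 : (41 : ℝ) ≤ x := le_trans hp41R hx
      have hθx := hθ x hx41
      have hconst : chebyshevθ x = chebyshevθ p := by
        have := theta_const (k := k) (x := x) (by rw [hpdef]; exact hx)
          (by rw [hqdef]; exact hxq)
        rwa [hpdef] at this
      have h1 := (abs_lt.1 hθx).1
      have h2 : (1 / 2) * x * Real.exp (-Real.sqrt (Real.log x) / 3) ≤ (1 / 2) * x * ε := by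
        apply mul_le_mul_of_nonneg_left (hεmono x hx)
        linarith
      rw [hconst] at h1
      nlinarith
    have hq_le : (q : ℝ) * (1 - (1 / 2) * ε) ≤ chebyshevθ p := by
      by_contra hcon
      push_neg at hcon
      set c := chebyshevθ p / (1 - (1 / 2) * ε) with hcdef
      have hcq : c < (q : ℝ) := by
        rw [hcdef, div_lt_iff₀ hden]
        linarith
      have hpc : (p : ℝ) < c := by
        rw [hcdef, lt_div_iff₀ hden]
        nlinarith
      set x := (c + q) / 2 with hxdef
      have hx1 : (p : ℝ) ≤ x := by rw [hxdef]; linarith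
      have hx2 : x < (q : ℝ) := by rw [hxdef]; linarith
      have hcx : c < x := by rw [hxdef]; linarith
      have := hkey x hx1 hx2
      rw [hcdef, div_lt_iff₀ hden] at hcx
      linarith
    rw [div_lt_div_iff₀ hppos hden]
    nlinarith
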